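/- Let w(x) = Σ_{n=1}^∞ exp(-π n² x) for Re(x) > 0. Then the function b ↦ 1 + 2w(e^{ib}), together with all its derivatives with respect to b, tends to 0 as b → π/2⁻. -/

import Mathlib

/-!
Since `1 + 2 w(x) = θ(i x)` for Jacobi's `θ`, the function of `b` is the restriction to the real
line of the holomorphic `F(z) = θ(i e^{iz})`, and `i e^{ib} → -1`, a cusp of `θ`, as `b → π/2`.
With `σ = i e^{iz} + 1` one has `θ(σ - 1) = θ₂(1/2, σ)`, and the functional equation of `θ₂` turns
this into `(-iσ)^{-1/2} e^{-πi/(4σ)} θ₂(1/(2σ), -1/σ)`, whose last factor stays bounded while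
`Im(-1/σ) → ∞`. On the disc of radius `δ/2` about `b = π/2 - δ` this gives
`|F| ≤ 8 δ⁻¹ e^{-π/(288 δ)} C` with `C = ∑ₙ e^{-π(n² - n)}`, and Cauchy's estimate on that disc
bounds the `p`-th derivative at `b` by `p! (2/δ)^p` times this, which still tends to `0` as
`δ → 0⁺`.
-/

open Complex Real Filter

noncomputable def w (x : ℂ) : ℂ :=
  ∑' n : ℕ, Complex.exp (-(π : ℂ) * ((n : ℂ) + 1) ^ 2 * x)

open Metric Topology
open scoped Nat

lemma jacobiTheta₂_add_one_right (z τ : ℂ) :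
    jacobiTheta₂ z (τ + 1) = jacobiTheta₂ (z + 2⁻¹) τ := by
  refine tsum_congr fun n ↦ ?_
  -- the two exponents differ by `π i (n² - n)`, and `n² - n` is even
  obtain ⟨k, hk⟩ := Int.even_mul_pred_self n
  rw [jacobiTheta₂_term, jacobiTheta₂_term, Complex.exp_eq_exp_iff_exists_int]
  refine ⟨k, ?_⟩
  have hk' : (n : ℂ) * (n - 1) = k + k := by exact_mod_cast hk
  linear_combination π * I * hk'

lemma jacobiTheta_eq_jacobiTheta₂_half_add_one (τ : ℂ) :
    jacobiTheta τ = jacobiTheta₂ 2⁻¹ (τ + 1) := by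
  rw [jacobiTheta₂_add_one_right, show (2⁻¹ + 2⁻¹ : ℂ) = 0 + 1 by norm_num,
    jacobiTheta₂_add_left, jacobiTheta_eq_jacobiTheta₂]

lemma one_add_two_mul_w_eq_jacobiTheta {x : ℂ} (hx : 0 < x.re) :
    1 + 2 * w x = jacobiTheta (I * x) := by
  rw [jacobiTheta_eq_tsum_nat (by simpa using hx), w]
  congr 2
  refine tsum_congr fun n ↦ ?_
  congr 1
  linear_combination -(π : ℂ) * ((n : ℂ) + 1) ^ 2 * x * I_sq

lemma norm_jacobiTheta₂_neg_half_le {τ : ℂ} (hτ : 1 ≤ τ.im) :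
    ‖jacobiTheta₂ (-(τ / 2)) τ‖ ≤ ∑' n : ℤ, ‖jacobiTheta₂_term n (-(I / 2)) I‖ := by
  have hsum (τ : ℂ) (hτ : 0 < τ.im) : Summable fun n : ℤ ↦ ‖jacobiTheta₂_term n (-(τ / 2)) τ‖ :=
    summable_norm_iff.mpr ((summable_jacobiTheta₂_term_iff _ _).mpr hτ)
  refine (norm_tsum_le_tsum_norm (hsum τ (by linarith))).trans
    ((hsum τ (by linarith)).tsum_le_tsum (fun n ↦ ?_) (by simpa using hsum I (by simp)))
  have hn : (0 : ℝ) ≤ n ^ 2 - n := by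
    have : (0 : ℤ) ≤ n ^ 2 - n := by nlinarith [sq_nonneg n]
    exact_mod_cast this
  simp only [norm_jacobiTheta₂_term, Real.exp_le_exp, neg_im, div_ofNat_im, I_im]
  nlinarith [mul_le_mul_of_nonneg_left hτ hn, pi_pos]

lemma norm_jacobiTheta₂_half_le {σ : ℂ} (hσ : 1 ≤ (-1 / σ).im) :
    ‖jacobiTheta₂ 2⁻¹ σ‖ ≤
      σ.im⁻¹ * rexp (-(π / 4) * (-1 / σ).im) * ∑' n : ℤ, ‖jacobiTheta₂_term n (-(I / 2)) I‖ := by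
  have hσ0 : σ ≠ 0 := by rintro rfl; norm_num at hσ
  have hnormSq : 0 < normSq σ := normSq_pos.mpr hσ0
  have him : (-1 / σ).im = σ.im / normSq σ := by
    rw [neg_div, neg_im, one_div, inv_im]; ring
  have hhoro : normSq σ ≤ σ.im := by
    rw [him, le_div_iff₀ hnormSq] at hσ; linarith
  have him_pos : 0 < σ.im := hnormSq.trans_le hhoro
  have hroot : ‖1 / (-I * σ) ^ (1 / 2 : ℂ)‖ ≤ σ.im⁻¹ := by
    rw [show (1 / 2 : ℂ) = ((1 / 2 : ℝ) : ℂ) by norm_num, norm_div, norm_one, norm_cpow_real,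
      norm_mul, norm_neg, norm_I, one_mul, ← Real.sqrt_eq_rpow, one_div]
    refine inv_anti₀ him_pos (Real.le_sqrt_of_sq_le ?_)
    calc σ.im ^ 2 ≤ normSq σ := by rw [normSq_apply]; nlinarith [mul_self_nonneg σ.re]
      _ ≤ σ.im := hhoro
      _ ≤ ‖σ‖ := (le_abs_self _).trans (abs_im_le_norm σ)
  have hexp : ‖cexp (-π * I * 2⁻¹ ^ 2 / σ)‖ = rexp (-(π / 4) * (-1 / σ).im) := by
    rw [norm_exp, show -π * I * 2⁻¹ ^ 2 / σ = ((π / 4 : ℝ) : ℂ) * (-1 / σ) * I by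
      push_cast; ring, mul_I_re, im_ofReal_mul]
    ring_nf
  have htheta : ‖jacobiTheta₂ (2⁻¹ / σ) (-1 / σ)‖ ≤
      ∑' n : ℤ, ‖jacobiTheta₂_term n (-(I / 2)) I‖ := by
    rw [show 2⁻¹ / σ = -((-1 / σ) / 2) by ring]
    exact norm_jacobiTheta₂_neg_half_le hσ
  rw [jacobiTheta₂_functional_equation, norm_mul, norm_mul, hexp]
  gcongr

lemma le_re_exp_I_mul {δ : ℝ} (hδ : δ ≤ 1) {z : ℂ}
    (hz : z ∈ closedBall ((π / 2 - δ : ℝ) : ℂ) (δ / 2)) : δ / 8 ≤ (cexp (I * z)).re := by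
  rw [mem_closedBall, Complex.dist_eq] at hz
  have hre : |z.re - (π / 2 - δ)| ≤ δ / 2 := by simpa using (abs_re_le_norm _).trans hz
  have him : |z.im| ≤ δ / 2 := by simpa using (abs_im_le_norm _).trans hz
  obtain ⟨hre₁, hre₂⟩ := abs_le.mp hre
  obtain ⟨him₁, him₂⟩ := abs_le.mp him
  have hδ₀ : 0 ≤ δ := by linarith
  have hsin : δ / 4 ≤ Real.sin (π / 2 - z.re) :=
    calc δ / 4 ≤ δ / π := div_le_div_of_nonneg_left hδ₀ pi_pos pi_le_four
      _ = 2 / π * (δ / 2) := by field_simp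
      _ ≤ 2 / π * (π / 2 - z.re) := by gcongr; linarith
      _ ≤ Real.sin (π / 2 - z.re) := mul_le_sin (by linarith) (by linarith [pi_gt_three])
  have hexp : 1 / 2 ≤ rexp (-z.im) := by linarith [Real.add_one_le_exp (-z.im)]
  rw [exp_re, ← Real.sin_pi_div_two_sub]
  simp only [mul_re, I_re, zero_mul, I_im, one_mul, zero_sub, mul_im, zero_add]
  calc δ / 8 = 1 / 2 * (δ / 4) := by ring
    _ ≤ rexp (-z.im) * Real.sin (π / 2 - z.re) := by gcongr

lemma norm_I_mul_exp_I_mul_add_one_le {δ : ℝ} (hδ : δ ≤ 2 / 3) {z : ℂ}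
    (hz : z ∈ closedBall ((π / 2 - δ : ℝ) : ℂ) (δ / 2)) : ‖I * cexp (I * z) + 1‖ ≤ 3 * δ := by
  rw [mem_closedBall, Complex.dist_eq] at hz
  have hδ₀ : 0 ≤ δ := by linarith [norm_nonneg (z - ((π / 2 - δ : ℝ) : ℂ))]
  have hrot : I * cexp (I * z) + 1 = -(cexp (I * (z - (π / 2 : ℝ))) - 1) := by
    rw [show I * z = I * (z - (π / 2 : ℝ)) + π / 2 * I by push_cast; ring, Complex.exp_add,
      exp_pi_div_two_mul_I]
    linear_combination cexp (I * (z - (π / 2 : ℝ))) * I_sq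
  have hdist : ‖I * (z - (π / 2 : ℝ))‖ ≤ 3 * δ / 2 := by
    rw [norm_mul, norm_I, one_mul]
    calc ‖z - (π / 2 : ℝ)‖ = ‖(z - ((π / 2 - δ : ℝ) : ℂ)) + ((-δ : ℝ) : ℂ)‖ := by
          push_cast; ring_nf
      _ ≤ ‖z - ((π / 2 - δ : ℝ) : ℂ)‖ + ‖((-δ : ℝ) : ℂ)‖ := norm_add_le _ _
      _ ≤ 3 * δ / 2 := by rw [norm_real, norm_neg, Real.norm_of_nonneg hδ₀]; linarith
  rw [hrot, norm_neg]
  linarith [norm_exp_sub_one_le (hdist.trans (by linarith))]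

lemma norm_jacobiTheta_I_mul_exp_I_mul_le {δ : ℝ} (hδ₀ : 0 < δ) (hδ₁ : δ ≤ 1 / 72) {z : ℂ}
    (hz : z ∈ closedBall ((π / 2 - δ : ℝ) : ℂ) (δ / 2)) :
    ‖jacobiTheta (I * cexp (I * z))‖ ≤
      8 * δ⁻¹ * rexp (-(π / 288) * δ⁻¹) * ∑' n : ℤ, ‖jacobiTheta₂_term n (-(I / 2)) I‖ := by
  set σ := I * cexp (I * z) + 1
  have him : δ / 8 ≤ σ.im := by
    simpa [σ] using le_re_exp_I_mul (by linarith) hz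
  have hnorm : ‖σ‖ ≤ 3 * δ := norm_I_mul_exp_I_mul_add_one_le (by linarith) hz
  have hnorm_pos : 0 < ‖σ‖ := by linarith [abs_im_le_norm σ, le_abs_self σ.im]
  have hcusp : 1 / (72 * δ) ≤ (-1 / σ).im := by
    rw [neg_div, neg_im, one_div σ, inv_im, neg_div, neg_neg, normSq_eq_norm_sq]
    calc 1 / (72 * δ) = (δ / 8) / (3 * δ) ^ 2 := by field_simp; ring
      _ ≤ σ.im / ‖σ‖ ^ 2 := by gcongr; linarith
  have h72 : 1 ≤ 1 / (72 * δ) := by rw [le_div_iff₀ (by positivity)]; linarith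
  rw [jacobiTheta_eq_jacobiTheta₂_half_add_one]
  refine (norm_jacobiTheta₂_half_le (h72.trans hcusp)).trans ?_
  have hC : 0 ≤ ∑' n : ℤ, ‖jacobiTheta₂_term n (-(I / 2)) I‖ := tsum_nonneg fun _ ↦ norm_nonneg _
  have hinv : σ.im⁻¹ ≤ 8 * δ⁻¹ :=
    calc σ.im⁻¹ ≤ (δ / 8)⁻¹ := inv_anti₀ (by positivity) him
      _ = 8 * δ⁻¹ := by field_simp
  have hexp : rexp (-(π / 4) * (-1 / σ).im) ≤ rexp (-(π / 288) * δ⁻¹) := by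
    rw [Real.exp_le_exp, neg_mul, neg_mul, neg_le_neg_iff]
    calc π / 288 * δ⁻¹ = π / 4 * (1 / (72 * δ)) := by field_simp; ring
      _ ≤ π / 4 * (-1 / σ).im := by gcongr
  gcongr ?_ * ?_ * _

lemma iteratedDeriv_comp_ofReal {U : Set ℂ} (hU : IsOpen U) (n : ℕ) :
    ∀ {f : ℂ → ℂ}, DifferentiableOn ℂ f U → ∀ {x : ℝ}, (x : ℂ) ∈ U →
      iteratedDeriv n (fun t : ℝ ↦ f t) x = iteratedDeriv n f x := by
  induction n with
  | zero => simp
  | succ n ih =>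
    intro f hf x hx
    have hderiv : (fun t : ℝ ↦ deriv f t) =ᶠ[𝓝 x] deriv (fun t : ℝ ↦ f t) := by
      filter_upwards [(hU.preimage continuous_ofReal).mem_nhds hx] with t ht
      exact ((hf.differentiableAt (hU.mem_nhds ht)).hasDerivAt.comp_ofReal).deriv.symm
    rw [iteratedDeriv_succ', iteratedDeriv_succ', ← hderiv.iteratedDeriv_eq, ih (hf.deriv hU) hx]

lemma norm_iteratedDeriv_one_add_two_mul_w_le {δ : ℝ} (hδ₀ : 0 < δ) (hδ₁ : δ ≤ 1 / 72) (p : ℕ) :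
    ‖iteratedDeriv p (fun b : ℝ ↦ 1 + 2 * w (cexp (I * b))) (π / 2 - δ)‖ ≤
      p ! * (8 * δ⁻¹ * rexp (-(π / 288) * δ⁻¹) *
        ∑' n : ℤ, ‖jacobiTheta₂_term n (-(I / 2)) I‖) * (2 * δ⁻¹) ^ p := by
  set U : Set ℂ := {z | 0 < (I * cexp (I * z)).im}
  have hU : IsOpen U := isOpen_lt continuous_const (by fun_prop)
  have hF : DifferentiableOn ℂ (fun z ↦ jacobiTheta (I * cexp (I * z))) U := fun z hz ↦
    ((differentiableAt_jacobiTheta hz).comp (f := fun z ↦ I * cexp (I * z)) z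
      (by fun_prop)).differentiableWithinAt
  have hball : closedBall ((π / 2 - δ : ℝ) : ℂ) (δ / 2) ⊆ U := fun z hz ↦ by
    simpa [U] using (by positivity : 0 < δ / 8).trans_le (le_re_exp_I_mul (by linarith) hz)
  have hcenter : ((π / 2 - δ : ℝ) : ℂ) ∈ U := hball (mem_closedBall_self (by positivity))
  have heq : (fun b : ℝ ↦ 1 + 2 * w (cexp (I * b))) =ᶠ[𝓝 (π / 2 - δ)]
      fun t : ℝ ↦ jacobiTheta (I * cexp (I * t)) := by
    filter_upwards [(hU.preimage continuous_ofReal).mem_nhds hcenter] with t ht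
    exact one_add_two_mul_w_eq_jacobiTheta (by simpa [U] using ht)
  rw [heq.iteratedDeriv_eq, iteratedDeriv_comp_ofReal hU p hF hcenter]
  refine (norm_iteratedDeriv_le_of_forall_mem_sphere_norm_le p (by positivity)
    (hF.diffContOnCl_ball hball) fun z hz ↦
      norm_jacobiTheta_I_mul_exp_I_mul_le hδ₀ hδ₁ (sphere_subset_closedBall hz)).trans_eq ?_
  rw [div_eq_mul_inv _ ((δ / 2) ^ p), ← inv_pow, inv_div, div_eq_mul_inv 2 δ]

lemma tendsto_inv_sub_nhdsLT (a : ℝ) : Tendsto (fun b : ℝ ↦ (a - b)⁻¹) (𝓝[<] a) atTop := by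
  refine tendsto_inv_nhdsGT_zero.comp (tendsto_nhdsWithin_of_tendsto_nhds_of_eventually_within _
    ?_ ?_)
  · simpa using ((continuous_sub_left a).tendsto a).mono_left nhdsWithin_le_nhds
  · filter_upwards [self_mem_nhdsWithin] with b (hb : b < a) using sub_pos.mpr hb

theorem stmt11 (p : ℕ) :
    Tendsto (iteratedDeriv p (fun b : ℝ => 1 + 2 * w (Complex.exp (I * b))))
      (nhdsWithin (π / 2) (Set.Iio (π / 2))) (nhds 0) := by
  set C := ∑' n : ℤ, ‖jacobiTheta₂_term n (-(I / 2)) I‖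
  have hbound : Tendsto (fun t : ℝ ↦ p ! * (8 * t * rexp (-(π / 288) * t) * C) * (2 * t) ^ p)
      atTop (𝓝 0) := by
    have := (tendsto_rpow_mul_exp_neg_mul_atTop_nhds_zero (p + 1) (π / 288)
      (by positivity)).const_mul (p ! * 8 * C * 2 ^ p)
    rw [mul_zero] at this
    refine this.congr' ?_
    filter_upwards [eventually_ge_atTop 0] with t ht
    rw [Real.rpow_add_one' ht (by positivity), Real.rpow_natCast]
    ring
  refine squeeze_zero_norm' ?_ (hbound.comp (tendsto_inv_sub_nhdsLT _))
  filter_upwards [Ioo_mem_nhdsLT (show π / 2 - 1 / 72 < π / 2 by norm_num)] with b ⟨hb₁, hb₂⟩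
  have := norm_iteratedDeriv_one_add_two_mul_w_le (δ := π / 2 - b) (by linarith) (by linarith) p
  rwa [sub_sub_cancel] at this
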